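/- For all p ≥ 1 and 0 < ρ² < 1, the quantity τ² = ((1-ρ²)/ρ^{2(p+1)})·[ρ^{2(p+1)}(4 - (4p+3)ρ^{2p} + 4p·ρ^{2(p+1)} - ρ^{2(2p+1)}) + (1 - (p+1)ρ^{2p} + (p-1)ρ^{2(p+1)})²] satisfies τ² ≤ (1-ρ²)/ρ^{2(p+1)}. -/

import Mathlib

/-!
Write `x = ρ²`, `a = x ^ p` and `t = (p + 1)(1 - x) a`. The bracket in `τ²` is,
identically, `(1 - t)² + x a² (1 - x a)`. The two geometric-sum estimates
`a (1 - x a) ≤ t ≤ 1 - x a` give `x a² (1 - x a) ≤ a (1 - x a) ≤ t` and `0 ≤ t ≤ 1`, hence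
the bracket is at most `(1 - t)² + t ≤ 1`.
-/

open Finset

lemma one_sub_pow_le_mul_one_sub {x : ℝ} (hx : -1 ≤ x) (n : ℕ) :
    1 - x ^ n ≤ n * (1 - x) := by
  have := one_add_mul_le_pow (a := x - 1) (by linarith) n
  rw [add_sub_cancel] at this
  linarith

lemma succ_mul_one_sub_mul_pow_le {x : ℝ} (hx0 : 0 ≤ x) (hx1 : x ≤ 1) (n : ℕ) :
    (n + 1) * (1 - x) * x ^ n ≤ 1 - x ^ (n + 1) := by
  have hsum : (n + 1 : ℝ) * x ^ n ≤ ∑ i ∈ range (n + 1), x ^ i := by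
    have := card_nsmul_le_sum (range (n + 1)) (x ^ ·) (x ^ n) fun i hi ↦
      pow_le_pow_of_le_one hx0 hx1 (Nat.lt_succ_iff.mp (mem_range.mp hi))
    simpa using this
  rw [← mul_neg_geom_sum]
  linear_combination mul_le_mul_of_nonneg_left hsum (sub_nonneg.mpr hx1)

lemma tau_sq_bracket_eq (x : ℝ) (p : ℕ) :
    x ^ (p + 1) * (4 - (4 * (p : ℝ) + 3) * x ^ p + 4 * (p : ℝ) * x ^ (p + 1) - x ^ (2 * p + 1))
      + (1 - ((p : ℝ) + 1) * x ^ p + ((p : ℝ) - 1) * x ^ (p + 1)) ^ 2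
      = (1 - (p + 1) * (1 - x) * x ^ p) ^ 2 + x ^ (p + 1) * x ^ p * (1 - x ^ (p + 1)) := by
  ring

lemma tau_sq_bracket_le_one {x : ℝ} (hx0 : 0 ≤ x) (hx1 : x ≤ 1) (p : ℕ) :
    x ^ (p + 1) * (4 - (4 * (p : ℝ) + 3) * x ^ p + 4 * (p : ℝ) * x ^ (p + 1) - x ^ (2 * p + 1))
      + (1 - ((p : ℝ) + 1) * x ^ p + ((p : ℝ) - 1) * x ^ (p + 1)) ^ 2 ≤ 1 := by
  rw [tau_sq_bracket_eq]
  set a := x ^ p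
  set s := x ^ (p + 1)
  set t := (p + 1) * (1 - x) * a
  have ha : 0 ≤ a := pow_nonneg hx0 p
  have hs0 : 0 ≤ s := pow_nonneg hx0 _
  have hs1 : s ≤ 1 := pow_le_one₀ hx0 hx1
  have hat : a * (1 - s) ≤ t := by
    have := mul_le_mul_of_nonneg_right
      (one_sub_pow_le_mul_one_sub (x := x) (by linarith) (p + 1)) ha
    push_cast at this
    linarith
  have ht1 : t ≤ 1 := (succ_mul_one_sub_mul_pow_le hx0 hx1 p).trans (by linarith)
  have ht0 : 0 ≤ t := (mul_nonneg ha (sub_nonneg.mpr hs1)).trans hat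
  calc (1 - t) ^ 2 + s * a * (1 - s)
      ≤ (1 - t) ^ 2 + a * (1 - s) := by
        gcongr
        exact mul_le_of_le_one_left ha hs1
    _ ≤ (1 - t) ^ 2 + t := by gcongr
    _ ≤ 1 := by nlinarith

theorem tau_sq_le_general (p : ℕ) (ρ : ℝ) (hρ1 : |ρ| < 1)
    (τ2 : ℝ)
    (hτ : τ2 = ((1 - ρ ^ 2) / ρ ^ (2 * (p + 1))) *
      (ρ ^ (2 * (p + 1)) * (4 - (4 * (p : ℝ) + 3) * ρ ^ (2 * p)
        + 4 * (p : ℝ) * ρ ^ (2 * (p + 1)) - ρ ^ (2 * (2 * p + 1)))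
      + (1 - ((p : ℝ) + 1) * ρ ^ (2 * p) + ((p : ℝ) - 1) * ρ ^ (2 * (p + 1))) ^ 2)) :
    τ2 ≤ (1 - ρ ^ 2) / ρ ^ (2 * (p + 1)) := by
  have hx1 : ρ ^ 2 ≤ 1 := by nlinarith [sq_abs ρ, abs_nonneg ρ]
  have hc : 0 ≤ (1 - ρ ^ 2) / ρ ^ (2 * (p + 1)) :=
    div_nonneg (sub_nonneg.mpr hx1) (pow_mul ρ 2 _ ▸ pow_nonneg (sq_nonneg ρ) _)
  rw [hτ]
  refine mul_le_of_le_one_right hc ?_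
  simpa only [pow_mul] using tau_sq_bracket_le_one (sq_nonneg ρ) hx1 p

/-- The asymptotic variance τ² is at most (1-ρ²)/ρ^{2(p+1)}. -/
theorem tau_sq_le (p : ℕ) (hp : 1 ≤ p) (ρ : ℝ) (hρ0 : ρ ≠ 0) (hρ1 : |ρ| < 1)
    (τ2 : ℝ)
    (hτ : τ2 = ((1 - ρ ^ 2) / ρ ^ (2 * (p + 1))) *
      (ρ ^ (2 * (p + 1)) * (4 - (4 * (p : ℝ) + 3) * ρ ^ (2 * p)
        + 4 * (p : ℝ) * ρ ^ (2 * (p + 1)) - ρ ^ (2 * (2 * p + 1)))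
      + (1 - ((p : ℝ) + 1) * ρ ^ (2 * p) + ((p : ℝ) - 1) * ρ ^ (2 * (p + 1))) ^ 2)) :
    τ2 ≤ (1 - ρ ^ 2) / ρ ^ (2 * (p + 1)) :=
  tau_sq_le_general p ρ hρ1 τ2 hτ
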